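/- Define on pairs of circle functions the 2×2 matrix differential operators V̂₊ = [[0, e^{iθ/2}],[e^{iθ/2}∂_θ - i e^{iθ/2} j, 0]], V̂₋ = (i/4)[[0, e^{-iθ/2}],[e^{-iθ/2}∂_θ + i e^{-iθ/2} j, 0]], and Ĵ₃ = -i ∂_θ · I₂. Then [Ĵ₃, V̂_±] = ±(1/2)V̂_± and V̂₊V̂₋ + V̂₋V̂₊ = -(1/2)Ĵ₃. -/

import Mathlib

open Complex
open scoped ContDiff

/-- The odd operator `V̂₊ = [[0, e^{iθ/2}], [e^{iθ/2}∂_θ - i e^{iθ/2} j, 0]]`. -/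
noncomputable def Vhp (j : ℂ) (p : (ℝ → ℂ) × (ℝ → ℂ)) : (ℝ → ℂ) × (ℝ → ℂ) :=
  (fun θ => Complex.exp (I * θ / 2) * p.2 θ,
   fun θ => Complex.exp (I * θ / 2) * deriv p.1 θ
      - I * Complex.exp (I * θ / 2) * j * p.1 θ)

/-- The odd operator `V̂₋ = (i/4)[[0, e^{-iθ/2}], [e^{-iθ/2}∂_θ + i e^{-iθ/2} j, 0]]`. -/
noncomputable def Vhm (j : ℂ) (p : (ℝ → ℂ) × (ℝ → ℂ)) : (ℝ → ℂ) × (ℝ → ℂ) :=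
  (fun θ => (I / 4) * (Complex.exp (-(I * θ) / 2) * p.2 θ),
   fun θ => (I / 4) * (Complex.exp (-(I * θ) / 2) * deriv p.1 θ
      + I * Complex.exp (-(I * θ) / 2) * j * p.1 θ))

/-- The even operator `Ĵ₃ = -i ∂_θ · I₂`. -/
noncomputable def J3h (p : (ℝ → ℂ) × (ℝ → ℂ)) : (ℝ → ℂ) × (ℝ → ℂ) :=
  (fun θ => -I * deriv p.1 θ, fun θ => -I * deriv p.2 θ)

/-- `[Ĵ₃, V̂_±] = ±(1/2)V̂_±` and `V̂₊V̂₋ + V̂₋V̂₊ = -(1/2)Ĵ₃`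
on pairs of smooth functions. -/
theorem stmt8 (j : ℂ) (f g : ℝ → ℂ) (hf : ContDiff ℝ (⊤ : ℕ∞) f) (hg : ContDiff ℝ (⊤ : ℕ∞) g) :
    (∀ θ : ℝ,
      (J3h (Vhp j (f, g))).1 θ - (Vhp j (J3h (f, g))).1 θ = (1 / 2 : ℂ) * (Vhp j (f, g)).1 θ ∧
      (J3h (Vhp j (f, g))).2 θ - (Vhp j (J3h (f, g))).2 θ = (1 / 2 : ℂ) * (Vhp j (f, g)).2 θ) ∧
    (∀ θ : ℝ,
      (J3h (Vhm j (f, g))).1 θ - (Vhm j (J3h (f, g))).1 θ = -(1 / 2 : ℂ) * (Vhm j (f, g)).1 θ ∧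
      (J3h (Vhm j (f, g))).2 θ - (Vhm j (J3h (f, g))).2 θ = -(1 / 2 : ℂ) * (Vhm j (f, g)).2 θ) ∧
    (∀ θ : ℝ,
      (Vhp j (Vhm j (f, g))).1 θ + (Vhm j (Vhp j (f, g))).1 θ = -(1 / 2 : ℂ) * (J3h (f, g)).1 θ ∧
      (Vhp j (Vhm j (f, g))).2 θ + (Vhm j (Vhp j (f, g))).2 θ = -(1 / 2 : ℂ) * (J3h (f, g)).2 θ) := by
  have hfi : ContDiff ℝ ∞ f := hf.of_le (by simp)
  have hgi : ContDiff ℝ ∞ g := hg.of_le (by simp)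
  have hfd : Differentiable ℝ f := (contDiff_infty_iff_deriv.mp hfi).1
  have hgd : Differentiable ℝ g := (contDiff_infty_iff_deriv.mp hgi).1
  have hfd' : Differentiable ℝ (deriv f) :=
    (contDiff_infty_iff_deriv.mp (contDiff_infty_iff_deriv.mp hfi).2).1
  have hgd' : Differentiable ℝ (deriv g) :=
    (contDiff_infty_iff_deriv.mp (contDiff_infty_iff_deriv.mp hgi).2).1
  have hθ : ∀ θ : ℝ, HasDerivAt (fun t : ℝ => (t : ℂ)) 1 θ := fun θ => by
    simpa using (hasDerivAt_id θ).ofReal_comp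
  have hep : ∀ θ : ℝ, HasDerivAt (fun t : ℝ => Complex.exp (I * ↑t / 2))
      (Complex.exp (I * ↑θ / 2) * (I * 1 / 2)) θ := fun θ =>
    (((hθ θ).const_mul I).div_const 2).cexp
  have hem : ∀ θ : ℝ, HasDerivAt (fun t : ℝ => Complex.exp (-(I * ↑t) / 2))
      (Complex.exp (-(I * ↑θ) / 2) * (-(I * 1) / 2)) θ := fun θ =>
    ((((hθ θ).const_mul I).neg).div_const 2).cexp
  have hF : ∀ θ : ℝ, HasDerivAt f (deriv f θ) θ := fun θ => (hfd θ).hasDerivAt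
  have hG : ∀ θ : ℝ, HasDerivAt g (deriv g θ) θ := fun θ => (hgd θ).hasDerivAt
  have hF' : ∀ θ : ℝ, HasDerivAt (deriv f) (deriv (deriv f) θ) θ := fun θ => (hfd' θ).hasDerivAt
  have hG' : ∀ θ : ℝ, HasDerivAt (deriv g) (deriv (deriv g) θ) θ := fun θ => (hgd' θ).hasDerivAt
  -- derivative rewrites
  have dG1 : ∀ θ : ℝ, deriv (fun t : ℝ => Complex.exp (I * ↑t / 2) * g t) θ
      = Complex.exp (I * ↑θ / 2) * (I * 1 / 2) * g θ
        + Complex.exp (I * ↑θ / 2) * deriv g θ := fun θ => ((hep θ).mul (hG θ)).deriv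
  have dH1 : ∀ θ : ℝ, deriv (fun t : ℝ => Complex.exp (I * ↑t / 2) * deriv f t
        - I * Complex.exp (I * ↑t / 2) * j * f t) θ
      = (Complex.exp (I * ↑θ / 2) * (I * 1 / 2) * deriv f θ
          + Complex.exp (I * ↑θ / 2) * deriv (deriv f) θ)
        - ((I * (Complex.exp (I * ↑θ / 2) * (I * 1 / 2)) * j) * f θ
          + (I * Complex.exp (I * ↑θ / 2) * j) * deriv f θ) := fun θ =>
    (((hep θ).mul (hF' θ)).sub ((((hep θ).const_mul I).mul_const j).mul (hF θ))).deriv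
  have dG3 : ∀ θ : ℝ, deriv (fun t : ℝ => I / 4 * (Complex.exp (-(I * ↑t) / 2) * g t)) θ
      = I / 4 * (Complex.exp (-(I * ↑θ) / 2) * (-(I * 1) / 2) * g θ
        + Complex.exp (-(I * ↑θ) / 2) * deriv g θ) := fun θ =>
    (((hem θ).mul (hG θ)).const_mul (I / 4)).deriv
  have dH3 : ∀ θ : ℝ, deriv (fun t : ℝ => I / 4 * (Complex.exp (-(I * ↑t) / 2) * deriv f t
        + I * Complex.exp (-(I * ↑t) / 2) * j * f t)) θ
      = I / 4 * ((Complex.exp (-(I * ↑θ) / 2) * (-(I * 1) / 2) * deriv f θ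
          + Complex.exp (-(I * ↑θ) / 2) * deriv (deriv f) θ)
        + ((I * (Complex.exp (-(I * ↑θ) / 2) * (-(I * 1) / 2)) * j) * f θ
          + (I * Complex.exp (-(I * ↑θ) / 2) * j) * deriv f θ)) := fun θ =>
    ((((hem θ).mul (hF' θ)).add ((((hem θ).const_mul I).mul_const j).mul (hF θ))).const_mul
      (I / 4)).deriv
  have dKf : ∀ θ : ℝ, deriv (fun t : ℝ => -I * deriv f t) θ
      = -I * deriv (deriv f) θ := fun θ => ((hF' θ).const_mul (-I)).deriv
  have dKg : ∀ θ : ℝ, deriv (fun t : ℝ => -I * deriv g t) θ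
      = -I * deriv (deriv g) θ := fun θ => ((hG' θ).const_mul (-I)).deriv
  have hE : ∀ θ : ℝ, Complex.exp (I * ↑θ / 2) * Complex.exp (-(I * ↑θ) / 2) = 1 := fun θ => by
    rw [← Complex.exp_add, show I * ↑θ / 2 + -(I * ↑θ) / 2 = 0 by ring, Complex.exp_zero]
  refine ⟨fun θ => ?_, fun θ => ?_, fun θ => ?_⟩
  · constructor
    · simp only [Vhp, J3h]
      rw [dG1]
      linear_combination (-(1 / 2 : ℂ) * Complex.exp (I * ↑θ / 2) * g θ) * Complex.I_sq
    · simp only [Vhp, J3h]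
      rw [dH1, dKf]
      linear_combination (-(1 / 2 : ℂ) * Complex.exp (I * ↑θ / 2) * deriv f θ
        + (I / 2) * Complex.exp (I * ↑θ / 2) * j * f θ) * Complex.I_sq
  · constructor
    · simp only [Vhm, J3h]
      rw [dG3]
      linear_combination ((I / 8) * Complex.exp (-(I * ↑θ) / 2) * g θ) * Complex.I_sq
    · simp only [Vhm, J3h]
      rw [dH3, dKf]
      linear_combination ((I / 8) * Complex.exp (-(I * ↑θ) / 2) * deriv f θ
        + (I ^ 2 / 8) * Complex.exp (-(I * ↑θ) / 2) * j * f θ) * Complex.I_sq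
  · constructor
    · simp only [Vhp, Vhm, J3h]
      linear_combination (I / 2 * deriv f θ) * hE θ
    · simp only [Vhp, Vhm, J3h]
      rw [dG1, dG3]
      linear_combination (I / 2 * deriv g θ) * hE θ
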